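/- arXiv:2404.12847 — 2 statements merged into one kernel-verified Lean document; each statement's English description precedes it below -/
import Mathlib

section
/- For a Hilbert–Schmidt operator A : H₊ → H₋, the operator defined in block form with blocks ((1+A*A)⁻¹, (1+A*A)⁻¹A*, A(1+A*A)⁻¹, A(1+A*A)⁻¹A*) is an orthogonal projection (idempotent and self-adjoint) on H₊ ⊕ H₋. -/
open ContinuousLinearMap

/-- A bounded operator between Hilbert spaces is Hilbert--Schmidt if for every
Hilbert basis of the domain the sum of squared norms of images is finite. -/
def IsHilbertSchmidt {E F : Type*} [NormedAddCommGroup E] [InnerProductSpace ℂ E]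
    [NormedAddCommGroup F] [InnerProductSpace ℂ F] (T : E →L[ℂ] F) : Prop :=
  ∀ (ι : Type) (b : HilbertBasis ι ℂ E), Summable fun i => ‖T (b i)‖ ^ 2

variable {E F : Type*} [NormedAddCommGroup E] [InnerProductSpace ℂ E] [CompleteSpace E]
  [NormedAddCommGroup F] [InnerProductSpace ℂ F] [CompleteSpace F]

/-- The block operator on `E ⊕ F` (with the `L²` inner product) with given blocks. -/
noncomputable def blockOp (T₁₁ : E →L[ℂ] E) (T₁₂ : F →L[ℂ] E)
    (T₂₁ : E →L[ℂ] F) (T₂₂ : F →L[ℂ] F) :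
    WithLp 2 (E × F) →L[ℂ] WithLp 2 (E × F) :=
  (WithLp.prodContinuousLinearEquiv 2 ℂ E F).symm.toContinuousLinearMap ∘L
    ((T₁₁ ∘L fst ℂ E F + T₁₂ ∘L snd ℂ E F).prod
      (T₂₁ ∘L fst ℂ E F + T₂₂ ∘L snd ℂ E F)) ∘L
    (WithLp.prodContinuousLinearEquiv 2 ℂ E F).toContinuousLinearMap


omit [CompleteSpace E] [CompleteSpace F] in
lemma blockOp_apply (T₁₁ : E →L[ℂ] E) (T₁₂ : F →L[ℂ] E)
    (T₂₁ : E →L[ℂ] F) (T₂₂ : F →L[ℂ] F) (x : WithLp 2 (E × F)) :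
    blockOp T₁₁ T₁₂ T₂₁ T₂₂ x =
      (WithLp.equiv 2 (E × F)).symm
        (T₁₁ x.fst + T₁₂ x.snd, T₂₁ x.fst + T₂₂ x.snd) := by
  rfl

omit [CompleteSpace E] [CompleteSpace F] in
lemma blockOp_comp (T₁₁ : E →L[ℂ] E) (T₁₂ : F →L[ℂ] E) (T₂₁ : E →L[ℂ] F) (T₂₂ : F →L[ℂ] F)
    (U₁₁ : E →L[ℂ] E) (U₁₂ : F →L[ℂ] E) (U₂₁ : E →L[ℂ] F) (U₂₂ : F →L[ℂ] F) :
    blockOp T₁₁ T₁₂ T₂₁ T₂₂ ∘L blockOp U₁₁ U₁₂ U₂₁ U₂₂ =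
      blockOp (T₁₁ ∘L U₁₁ + T₁₂ ∘L U₂₁) (T₁₁ ∘L U₁₂ + T₁₂ ∘L U₂₂)
        (T₂₁ ∘L U₁₁ + T₂₂ ∘L U₂₁) (T₂₁ ∘L U₁₂ + T₂₂ ∘L U₂₂) := by
  ext x <;> simp [blockOp_apply] <;> exact ⟨by abel, by abel⟩

lemma blockOp_adjoint (T₁₁ : E →L[ℂ] E) (T₁₂ : F →L[ℂ] E) (T₂₁ : E →L[ℂ] F) (T₂₂ : F →L[ℂ] F) :
    adjoint (blockOp T₁₁ T₁₂ T₂₁ T₂₂) =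
      blockOp (adjoint T₁₁) (adjoint T₂₁) (adjoint T₁₂) (adjoint T₂₂) := by
  symm
  rw [ContinuousLinearMap.eq_adjoint_iff]
  intro x y
  simp [blockOp_apply, WithLp.prod_inner_apply, inner_add_left, inner_add_right,
    ContinuousLinearMap.adjoint_inner_left]
  ring

/-- The graph projector of `A : E → F` in block form. -/
noncomputable def graphProj (A : E →L[ℂ] F) : WithLp 2 (E × F) →L[ℂ] WithLp 2 (E × F) :=
  blockOp (Ring.inverse (1 + adjoint A ∘L A))
    (Ring.inverse (1 + adjoint A ∘L A) ∘L adjoint A)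
    (A ∘L Ring.inverse (1 + adjoint A ∘L A))
    (A ∘L Ring.inverse (1 + adjoint A ∘L A) ∘L adjoint A)

theorem graphProj_is_orthogonal_projection (A : E →L[ℂ] F) (hA : IsHilbertSchmidt A) :
    graphProj A ∘L graphProj A = graphProj A ∧ adjoint (graphProj A) = graphProj A := by
  set B := adjoint A with hB
  set S := (1 + B ∘L A) with hSdef
  have hS : IsUnit S := by
    have hpos : (0 : E →L[ℂ] E) ≤ B ∘L A := by
      rw [ContinuousLinearMap.nonneg_iff_isPositive]
      exact isPositive_adjoint_comp_self A
    exact CStarAlgebra.isUnit_of_le 1 (le_add_of_nonneg_right hpos)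
  set Siv := Ring.inverse S with hSiv
  have hr : S ∘L Siv = 1 := by
    rw [← ContinuousLinearMap.mul_def, Ring.mul_inverse_cancel _ hS]
  have hkey : ∀ z : E, Siv z + B (A (Siv z)) = z := by
    intro z
    have := DFunLike.congr_fun hr z
    simpa [hSdef] using this
  have hstar : adjoint Siv = Siv := by
    have hSstar : star S = S := by
      simp [hSdef, star_eq_adjoint, adjoint_comp, adjoint_adjoint, hB]
    rw [← star_eq_adjoint, hSiv, ← Ring.inverse_star, hSstar]
  constructor
  · rw [graphProj, blockOp_comp]
    congr 1
    · ext z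
      have := congrArg Siv (hkey z)
      simpa [map_add] using this
    · ext z
      have := congrArg Siv (hkey (B z))
      simpa [map_add] using this
    · ext z
      have := congrArg (fun w => A (Siv w)) (hkey z)
      simpa [map_add] using this
    · ext z
      have := congrArg (fun w => A (Siv w)) (hkey (B z))
      simpa [map_add] using this
  · rw [graphProj, blockOp_adjoint, ← hB, ← hSdef, ← hSiv]
    congr 1 <;> simp [adjoint_comp, adjoint_adjoint, hstar, hB, comp_assoc]
end

section
/- If A : H₊ → H₋ is Hilbert–Schmidt, then the graph projector P(A) (with blocks (1+A*A)⁻¹, (1+A*A)⁻¹A*, A(1+A*A)⁻¹, A(1+A*A)⁻¹A*) satisfies P(A) − P₊ ∈ L², i.e., the difference with the projection onto H₊ is a Hilbert–Schmidt operator. -/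
open ContinuousLinearMap

variable {E F : Type*} [NormedAddCommGroup E] [InnerProductSpace ℂ E] [CompleteSpace E]
  [NormedAddCommGroup F] [InnerProductSpace ℂ F] [CompleteSpace F]

section Aux

variable {G G' G'' : Type*}
  [NormedAddCommGroup G] [InnerProductSpace ℂ G] [CompleteSpace G]
  [NormedAddCommGroup G'] [InnerProductSpace ℂ G'] [CompleteSpace G']
  [NormedAddCommGroup G''] [InnerProductSpace ℂ G''] [CompleteSpace G'']

local notation "⟪" x ", " y "⟫" => @inner ℂ _ _ x y

/-- Parseval's identity for a Hilbert basis. -/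
lemma hasSum_parseval {ι : Type*} (b : HilbertBasis ι ℂ G) (x : G) :
    HasSum (fun i => ‖⟪b i, x⟫‖ ^ 2) (‖x‖ ^ 2) := by
  have key : ∀ z : ℂ, ((starRingEnd ℂ) z * z).re = ‖z‖ ^ 2 := fun z => by
    rw [mul_comm, Complex.mul_conj, Complex.ofReal_re, Complex.normSq_eq_norm_sq]
  have h := (b.hasSum_inner_mul_inner x x).mapL Complex.reCLM
  have h2 : Complex.reCLM ⟪x, x⟫ = ‖x‖ ^ 2 := by
    rw [Complex.reCLM_apply, inner_self_eq_norm_sq_to_K]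
    norm_cast
  rw [h2] at h
  refine h.congr_fun fun i => ?_
  rw [Complex.reCLM_apply, ← inner_conj_symm x (b i)]
  exact (key _).symm

/-- If `T` has square-summable images of a Hilbert basis of the domain, then its adjoint has
square-summable images of any Hilbert basis of the codomain. -/
lemma summable_adjoint_of_summable {ι κ : Type*} (T : G →L[ℂ] G') (b : HilbertBasis ι ℂ G)
    (c : HilbertBasis κ ℂ G') (h : Summable fun i => ‖T (b i)‖ ^ 2) :
    Summable fun j => ‖adjoint T (c j)‖ ^ 2 := by
  have hf : Summable (fun p : ι × κ => ‖⟪c p.2, T (b p.1)⟫‖ ^ 2) := by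
    rw [summable_prod_of_nonneg (fun p => by positivity)]
    refine ⟨fun i => (hasSum_parseval c (T (b i))).summable, ?_⟩
    exact h.congr fun i => ((hasSum_parseval c (T (b i))).tsum_eq).symm
  have hswap : Summable (fun p : κ × ι => ‖⟪b p.2, adjoint T (c p.1)⟫‖ ^ 2) := by
    have h' := ((Equiv.prodComm κ ι).summable_iff
      (f := fun p : ι × κ => ‖⟪c p.2, T (b p.1)⟫‖ ^ 2)).mpr hf
    refine h'.congr fun p => ?_
    show ‖⟪c p.1, T (b p.2)⟫‖ ^ 2 = ‖⟪b p.2, adjoint T (c p.1)⟫‖ ^ 2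
    rw [adjoint_inner_right, norm_inner_symm]
  have h2 := ((summable_prod_of_nonneg (fun p => by positivity)).mp hswap).2
  exact h2.congr fun j => (hasSum_parseval b (adjoint T (c j))).tsum_eq

lemma summable_comp_left {ι : Type*} (B : G' →L[ℂ] G'') (T : G →L[ℂ] G') (b : ι → G)
    (h : Summable fun i => ‖T (b i)‖ ^ 2) :
    Summable fun i => ‖(B ∘L T) (b i)‖ ^ 2 := by
  refine Summable.of_nonneg_of_le (fun i => by positivity) (fun i => ?_) (h.mul_left (‖B‖ ^ 2))
  have h1 : ‖B (T (b i))‖ ≤ ‖B‖ * ‖T (b i)‖ := B.le_opNorm _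
  calc ‖(B ∘L T) (b i)‖ ^ 2 ≤ (‖B‖ * ‖T (b i)‖) ^ 2 := by
        simpa using pow_le_pow_left₀ (norm_nonneg _) h1 2
    _ = ‖B‖ ^ 2 * ‖T (b i)‖ ^ 2 := by ring

/-- If a Hilbert space `G` has a Hilbert basis indexed by a `Type 0` and `X` embeds
isometrically into `G`, then `X` has a Hilbert basis indexed by a `Type 0`. -/
lemma exists_hilbertBasis_small {X : Type*} [NormedAddCommGroup X] [InnerProductSpace ℂ X]
    [CompleteSpace X] {ι : Type} (b : HilbertBasis ι ℂ G) (J : X →ₗᵢ[ℂ] G) :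
    ∃ (κ : Type), Nonempty (HilbertBasis κ ℂ X) := by
  classical
  obtain ⟨w, bw, hbw⟩ := exists_hilbertBasis ℂ X
  set v : w → G := fun j => J (bw j) with hv
  have hov : Orthonormal ℂ v := by
    rw [orthonormal_iff_ite]
    intro i j
    simp only [hv, J.inner_map_map]
    exact orthonormal_iff_ite.mp bw.orthonormal i j
  set s : ι → Set w := fun i => {j : w | ⟪b i, v j⟫ ≠ 0} with hs
  have hcnt : ∀ i, (s i).Countable := by
    intro i
    have hsum : Summable fun j : w => ‖⟪v j, b i⟫‖₊ ^ 2 := by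
      rw [← NNReal.summable_coe]
      push_cast
      exact hov.inner_products_summable (b i)
    refine (Summable.countable_support_nnreal _ hsum).mono ?_
    intro j hj
    simp only [hs, Set.mem_setOf_eq] at hj
    simp only [Function.mem_support, ne_eq, pow_eq_zero_iff', nnnorm_eq_zero]
    intro hc
    exact hj (inner_eq_zero_symm.mp hc.1)
  have hcover : ∀ j : w, ∃ i, j ∈ s i := by
    intro j
    by_contra hcon
    push_neg at hcon
    have h0 : HasSum (fun i => ‖⟪b i, v j⟫‖ ^ 2) (‖v j‖ ^ 2) := hasSum_parseval b (v j)
    have h0' : HasSum (fun _ : ι => (0 : ℝ)) (‖v j‖ ^ 2) := by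
      refine h0.congr_fun fun i => ?_
      have := hcon i
      simp only [hs, Set.mem_setOf_eq, not_not] at this
      simp [this]
    have hz : ‖v j‖ ^ 2 = 0 := h0'.unique hasSum_zero
    have h1 : ‖v j‖ = 1 := hov.1 j
    rw [h1] at hz
    norm_num at hz
  choose f hf using hcover
  have henum : ∀ i : ι, ∃ g : s i → ℕ, Function.Injective g := fun i =>
    have := (hcnt i).to_subtype; Countable.exists_injective_nat _
  choose g hg using henum
  set g' : ι → w → ℕ := fun i j => if h : j ∈ s i then g i ⟨j, h⟩ else 0 with hg'
  set Φ : w → ι × ℕ := fun j => (f j, g' (f j) j) with hΦ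
  have hΦinj : Function.Injective Φ := by
    intro j j' h
    have h1 : f j = f j' := congrArg Prod.fst h
    have h2 : g' (f j) j = g' (f j) j' := by
      have := congrArg Prod.snd h
      simpa [hΦ, ← h1] using this
    have hj : j ∈ s (f j) := hf j
    have hj' : j' ∈ s (f j) := h1 ▸ hf j'
    rw [hg'] at h2
    simp only [dif_pos hj, dif_pos hj'] at h2
    have := hg (f j) h2
    exact congrArg Subtype.val this
  set e : w ≃ Set.range Φ := Equiv.ofInjective Φ hΦinj
  refine ⟨Set.range Φ, ⟨HilbertBasis.mk (v := fun k => bw (e.symm k))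
    (bw.orthonormal.comp _ e.symm.injective) ?_⟩⟩
  have hr : Set.range (fun k => bw (e.symm k)) = Set.range bw :=
    e.symm.surjective.range_comp bw
  rw [hr, bw.dense_span]

end Aux

section Main

local notation "⟪" x ", " y "⟫" => @inner ℂ _ _ x y

theorem blockOp_apply_fst (T₁₁ : E →L[ℂ] E) (T₁₂ : F →L[ℂ] E)
    (T₂₁ : E →L[ℂ] F) (T₂₂ : F →L[ℂ] F) (x : WithLp 2 (E × F)) :
    (blockOp T₁₁ T₁₂ T₂₁ T₂₂ x).fst = T₁₁ x.fst + T₁₂ x.snd := rfl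

theorem blockOp_apply_snd (T₁₁ : E →L[ℂ] E) (T₁₂ : F →L[ℂ] E)
    (T₂₁ : E →L[ℂ] F) (T₂₂ : F →L[ℂ] F) (x : WithLp 2 (E × F)) :
    (blockOp T₁₁ T₁₂ T₂₁ T₂₂ x).snd = T₂₁ x.fst + T₂₂ x.snd := rfl

variable (E F) in
/-- The isometric inclusion of the first summand. -/
noncomputable def inl2 : E →ₗᵢ[ℂ] WithLp 2 (E × F) where
  toLinearMap := ((WithLp.prodContinuousLinearEquiv 2 ℂ E F).symm.toContinuousLinearMap ∘L
    ContinuousLinearMap.inl ℂ E F).toLinearMap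
  norm_map' := fun x => by
    show ‖(WithLp.equiv 2 (E × F)).symm (x, 0)‖ = ‖x‖
    rw [WithLp.prod_norm_eq_of_L2]
    simp

variable (E F) in
/-- The isometric inclusion of the second summand. -/
noncomputable def inr2 : F →ₗᵢ[ℂ] WithLp 2 (E × F) where
  toLinearMap := ((WithLp.prodContinuousLinearEquiv 2 ℂ E F).symm.toContinuousLinearMap ∘L
    ContinuousLinearMap.inr ℂ E F).toLinearMap
  norm_map' := fun x => by
    show ‖(WithLp.equiv 2 (E × F)).symm (0, x)‖ = ‖x‖
    rw [WithLp.prod_norm_eq_of_L2]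
    simp

lemma isUnit_one_add_adjoint_comp (A : E →L[ℂ] F) : IsUnit (1 + adjoint A ∘L A) := by
  apply isUnit_of_forall_le_norm_inner_map _ (c := 1) one_pos
  intro x
  have h1 : ⟪(1 + adjoint A ∘L A) x, x⟫ = ((‖x‖ ^ 2 + ‖A x‖ ^ 2 : ℝ) : ℂ) := by
    simp only [add_apply, one_apply, comp_apply, inner_add_left]
    rw [adjoint_inner_left, inner_self_eq_norm_sq_to_K, ContinuousLinearMap.one_apply,
      inner_self_eq_norm_sq_to_K]
    push_cast
    norm_cast
  rw [h1, Complex.norm_real, Real.norm_eq_abs, abs_of_nonneg (by positivity)]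
  push_cast
  nlinarith [sq_nonneg ‖A x‖]

set_option maxHeartbeats 1000000 in
theorem graphProj_sub_proj_hilbertSchmidt (A : E →L[ℂ] F) (hA : IsHilbertSchmidt A) :
    IsHilbertSchmidt (graphProj A - blockOp (1 : E →L[ℂ] E) 0 0 0) := by
  intro ι b
  obtain ⟨κ, ⟨c⟩⟩ := exists_hilbertBasis_small b (inl2 E F)
  obtain ⟨μ, ⟨d⟩⟩ := exists_hilbertBasis_small b (inr2 E F)
  set Q : E →L[ℂ] E := Ring.inverse (1 + adjoint A ∘L A) with hQdef
  have hU : IsUnit (1 + adjoint A ∘L A) := isUnit_one_add_adjoint_comp A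
  have hQmul : Q * (1 + adjoint A ∘L A) = 1 := Ring.inverse_mul_cancel _ hU
  have hQ1 : Q - 1 = -((Q ∘L adjoint A) ∘L A) := by
    have h2 : Q + Q * (adjoint A ∘L A) = 1 := by
      rw [← hQmul, mul_add, mul_one]
    calc Q - 1 = Q - (Q + Q * (adjoint A ∘L A)) := by rw [h2]
      _ = -(Q * (adjoint A ∘L A)) := by abel
      _ = -((Q ∘L adjoint A) ∘L A) := rfl
  -- basic summability facts
  have hc : Summable fun k => ‖A (c k)‖ ^ 2 := hA κ c
  have hd : Summable fun j => ‖adjoint A (d j)‖ ^ 2 := summable_adjoint_of_summable A c d hc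
  have fact1 : ∀ S : WithLp 2 (E × F) →L[ℂ] E, Summable fun i => ‖(A ∘L S) (b i)‖ ^ 2 := by
    intro S
    have h3 := summable_comp_left (adjoint S) (adjoint A) (⇑d) hd
    have h4 := summable_adjoint_of_summable _ d b h3
    rwa [adjoint_comp, adjoint_adjoint, adjoint_adjoint] at h4
  have fact2 : ∀ S : WithLp 2 (E × F) →L[ℂ] F, Summable fun i => ‖(adjoint A ∘L S) (b i)‖ ^ 2 := by
    intro S
    have h3 := summable_comp_left (adjoint S) A (⇑c) hc
    have h4 := summable_adjoint_of_summable _ c b h3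
    rwa [adjoint_comp, adjoint_adjoint] at h4
  set P₁ : WithLp 2 (E × F) →L[ℂ] E :=
    fst ℂ E F ∘L (WithLp.prodContinuousLinearEquiv 2 ℂ E F).toContinuousLinearMap with hP₁
  set P₂ : WithLp 2 (E × F) →L[ℂ] F :=
    snd ℂ E F ∘L (WithLp.prodContinuousLinearEquiv 2 ℂ E F).toContinuousLinearMap with hP₂
  have hP₁x : ∀ z : WithLp 2 (E × F), P₁ z = z.fst := fun z => rfl
  have hP₂x : ∀ z : WithLp 2 (E × F), P₂ z = z.snd := fun z => rfl
  clear_value Q P₁ P₂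
  set C1 : ℝ := ‖Q ∘L adjoint A‖ with hC1
  set C2 : ℝ := ‖Q‖ with hC2
  clear_value C1 C2
  set D : WithLp 2 (E × F) →L[ℂ] WithLp 2 (E × F) :=
    graphProj A - blockOp (1 : E →L[ℂ] E) 0 0 0 with hD
  clear_value D
  have key : ∀ x : WithLp 2 (E × F),
      ‖D x‖ ^ 2 ≤
      (2 * C1 ^ 2) * ‖(A ∘L P₁) x‖ ^ 2 + (2 * C2 ^ 2) * ‖(adjoint A ∘L P₂) x‖ ^ 2
      + 2 * ‖(A ∘L (Q ∘L P₁)) x‖ ^ 2 + 2 * ‖(A ∘L ((Q ∘L adjoint A) ∘L P₂)) x‖ ^ 2 := by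
    intro x
    set y := D x with hy
    clear_value y
    have hyfst : y.fst = (Q - 1) x.fst + Q (adjoint A x.snd) := by
      rw [hy, hD, sub_apply, WithLp.sub_fst]
      show (graphProj A x).fst - (blockOp (1 : E →L[ℂ] E) 0 0 0 x).fst = _
      rw [graphProj, blockOp_apply_fst, blockOp_apply_fst]
      simp only [one_apply, zero_apply, add_zero, comp_apply,
        ContinuousLinearMap.sub_apply, one_apply, ← hQdef]
      abel
    have hysnd : y.snd = A (Q x.fst) + A (Q (adjoint A x.snd)) := by
      rw [hy, hD, sub_apply, WithLp.sub_snd]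
      show (graphProj A x).snd - (blockOp (1 : E →L[ℂ] E) 0 0 0 x).snd = _
      rw [graphProj, blockOp_apply_snd, blockOp_apply_snd]
      simp only [zero_apply, add_zero, zero_add, comp_apply, sub_zero, ← hQdef]
    have hnorm : ‖y‖ ^ 2 = ‖y.fst‖ ^ 2 + ‖y.snd‖ ^ 2 := WithLp.prod_norm_sq_eq_of_L2 y
    have e1 : (A ∘L P₁) x = A x.fst := by rw [comp_apply, hP₁x]
    have e2 : (adjoint A ∘L P₂) x = adjoint A x.snd := by rw [comp_apply, hP₂x]
    have e3 : (A ∘L (Q ∘L P₁)) x = A (Q x.fst) := by rw [comp_apply, comp_apply, hP₁x]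
    have e4 : (A ∘L ((Q ∘L adjoint A) ∘L P₂)) x = A (Q (adjoint A x.snd)) := by
      rw [comp_apply, comp_apply, comp_apply, hP₂x]
    have hu1 : ‖(Q - 1) x.fst‖ ≤ C1 * ‖A x.fst‖ := by
      rw [hQ1]
      have h0 : (-((Q ∘L adjoint A) ∘L A)) x.fst = -((Q ∘L adjoint A) (A x.fst)) := by
        rw [ContinuousLinearMap.neg_apply, comp_apply]
      rw [h0, norm_neg, hC1]
      exact (Q ∘L adjoint A).le_opNorm (A x.fst)
    have hu2 : ‖Q (adjoint A x.snd)‖ ≤ C2 * ‖adjoint A x.snd‖ := by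
      rw [hC2]
      exact Q.le_opNorm _
    have t1 : ‖y.fst‖ ≤ ‖(Q - 1) x.fst‖ + ‖Q (adjoint A x.snd)‖ := by
      rw [hyfst]; exact norm_add_le _ _
    have t2 : ‖y.snd‖ ≤ ‖A (Q x.fst)‖ + ‖A (Q (adjoint A x.snd))‖ := by
      rw [hysnd]; exact norm_add_le _ _
    have s1 : ‖y.fst‖ ^ 2 ≤ (‖(Q - 1) x.fst‖ + ‖Q (adjoint A x.snd)‖) ^ 2 :=
      pow_le_pow_left₀ (norm_nonneg _) t1 2
    have s2 : ‖y.snd‖ ^ 2 ≤ (‖A (Q x.fst)‖ + ‖A (Q (adjoint A x.snd))‖) ^ 2 :=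
      pow_le_pow_left₀ (norm_nonneg _) t2 2
    have b1 : ‖(Q - 1) x.fst‖ ^ 2 ≤ (C1 * ‖A x.fst‖) ^ 2 :=
      pow_le_pow_left₀ (norm_nonneg _) hu1 2
    have b2 : ‖Q (adjoint A x.snd)‖ ^ 2 ≤ (C2 * ‖adjoint A x.snd‖) ^ 2 :=
      pow_le_pow_left₀ (norm_nonneg _) hu2 2
    rw [hnorm, e1, e2, e3, e4]
    nlinarith [sq_nonneg (‖(Q - 1) x.fst‖ - ‖Q (adjoint A x.snd)‖),
      sq_nonneg (‖A (Q x.fst)‖ - ‖A (Q (adjoint A x.snd))‖), s1, s2, b1, b2]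
  have hsum : Summable (fun i =>
      (2 * C1 ^ 2) * ‖(A ∘L P₁) (b i)‖ ^ 2 + (2 * C2 ^ 2) * ‖(adjoint A ∘L P₂) (b i)‖ ^ 2
      + 2 * ‖(A ∘L (Q ∘L P₁)) (b i)‖ ^ 2
      + 2 * ‖(A ∘L ((Q ∘L adjoint A) ∘L P₂)) (b i)‖ ^ 2) :=
    ((((fact1 P₁).mul_left _).add ((fact2 P₂).mul_left _)).add
      ((fact1 (Q ∘L P₁)).mul_left 2)).add ((fact1 ((Q ∘L adjoint A) ∘L P₂)).mul_left 2)
  exact Summable.of_nonneg_of_le (fun i => by positivity) (fun i => key (b i)) hsum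

end Main
end
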